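/- arXiv:2310.05711 — 3 statements merged into one kernel-verified Lean document; each statement's English description precedes it below -/
import Mathlib

section
/- Let α : L → B and γ : B → L form a Galois connection between complete lattices, and let f : L → L, b : B → B be monotone with α ∘ f = b ∘ α. Then α maps the least fixpoint of f to the least fixpoint of b: α(μ f) = μ b. -/
/-- Fixpoint preservation along a Galois connection: if `α ∘ f = b ∘ α`
then `α (μ f) = μ b`. -/
theorem stmt_6 {L B : Type*} [CompleteLattice L] [CompleteLattice B]
    (α : L → B) (γ : B → L) (gc : GaloisConnection α γ)
    (f : L →o L) (b : B →o B)
    (hcomm : ∀ x, α (f x) = b (α x)) :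
    α (OrderHom.lfp f) = OrderHom.lfp b := by
  apply le_antisymm
  · rw [gc]
    apply OrderHom.lfp_le
    rw [← gc, hcomm]
    calc b (α (γ (OrderHom.lfp b))) ≤ b (OrderHom.lfp b) :=
          b.monotone (gc.l_u_le _)
      _ = OrderHom.lfp b := OrderHom.map_lfp b
  · apply OrderHom.lfp_le
    rw [← hcomm, OrderHom.map_lfp]
end

section
/- Let α ⊣ γ be a Galois connection between complete lattices L and B, let c = γ ∘ α be the induced closure, and let f : L → L be monotone with b = α ∘ f ∘ γ. If f is c-compatible, i.e., f ∘ c ≤ c ∘ f pointwise, then α(μ f) = μ b. -/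
/-- Fixpoint preservation via compatibility: if `b = α ∘ f ∘ γ` and `f` is
compatible with the closure `c = γ ∘ α` (i.e. `f ∘ c ≤ c ∘ f`), then
`α (μ f) = μ b`. -/
theorem stmt_7 {L B : Type*} [CompleteLattice L] [CompleteLattice B]
    (α : L → B) (γ : B → L) (gc : GaloisConnection α γ)
    (f : L →o L) (b : B →o B)
    (hb : ∀ x, b x = α (f (γ x)))
    (hcompat : ∀ x, f (γ (α x)) ≤ γ (α (f x))) :
    α (OrderHom.lfp f) = OrderHom.lfp b := by
  apply le_antisymm
  · rw [gc]
    apply OrderHom.lfp_le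
    have : f (γ (OrderHom.lfp b)) ≤ γ (α (f (γ (OrderHom.lfp b)))) := gc.le_u_l _
    calc f (γ (OrderHom.lfp b)) ≤ γ (α (f (γ (OrderHom.lfp b)))) := this
      _ = γ (b (OrderHom.lfp b)) := by rw [hb]
      _ = γ (OrderHom.lfp b) := by rw [OrderHom.map_lfp]
  · apply OrderHom.lfp_le
    calc b (α (OrderHom.lfp f)) = α (f (γ (α (OrderHom.lfp f)))) := hb _
      _ ≤ α (γ (α (f (OrderHom.lfp f)))) := gc.monotone_l (hcompat _)
      _ ≤ α (f (OrderHom.lfp f)) := gc.l_u_le _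
      _ = α (OrderHom.lfp f) := by rw [OrderHom.map_lfp]
end

section
/- Under the hypotheses of the predicate-conformance Galois connection with closure c = γ ∘ α and a subclosure c' of c, the closure c' is compatible (Λ ∘ c' ∘ c ⊆ c_{FX} ∘ Λ ∘ c') if and only if the depth-1 self-separation property holds: for every set S of predicates with S = c'(S) and α(S) = d, the set Λ(S) satisfies α_{FX}(Λ(S)) = α_{FX}(Λ(γ(d))). -/
/-- A subclosure `c'` of the closure `c = γ ∘ α` is compatible
(`Λ ∘ c' ∘ c ⊆ c_{FX} ∘ Λ ∘ c'`) iff the depth-1 self-separation property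
holds: whenever `S` is `c'`-closed and initial for `d` (i.e. `α S = d`), the
set `Λ S` is initial for the Kantorovich lifting `α_{FX}(Λ(γ d))`. -/
theorem stmt_19 {X FX Ω ΦX ΦFX ΦΩ : Type*}
    [CompleteLattice ΦX] [CompleteLattice ΦFX] [CompleteLattice ΦΩ]
    (reX : (X → Ω) → ΦΩ → ΦX) (reF : (FX → Ω) → ΦΩ → ΦFX)
    (hreXmono : ∀ k, Monotone (reX k)) (hreFmono : ∀ k, Monotone (reF k))
    (hreXmeet : ∀ k (s : Set ΦΩ), reX k (sInf s) = ⨅ e ∈ s, reX k e)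
    (hreFmeet : ∀ k (s : Set ΦΩ), reF k (sInf s) = ⨅ e ∈ s, reF k e)
    (dΩ : ΦΩ)
    (αX : Set (X → Ω) → ΦX) (hαX : ∀ S, αX S = ⨅ k ∈ S, reX k dΩ)
    (γX : ΦX → Set (X → Ω)) (hγX : ∀ d, γX d = {k | d ≤ reX k dΩ})
    (αF : Set (FX → Ω) → ΦFX) (hαF : ∀ S, αF S = ⨅ k ∈ S, reF k dΩ)
    (γF : ΦFX → Set (FX → Ω)) (hγF : ∀ d, γF d = {k | d ≤ reF k dΩ})
    (Λ : Set (X → Ω) → Set (FX → Ω)) (hΛ : Monotone Λ)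
    (c' : Set (X → Ω) → Set (X → Ω))
    (hc'mono : Monotone c') (hc'idem : ∀ S, c' (c' S) = c' S)
    (hc'ext : ∀ S, S ⊆ c' S)
    (hsub : ∀ S, c' S ⊆ γX (αX S)) :
    (∀ S, Λ (c' (γX (αX S))) ⊆ γF (αF (Λ (c' S)))) ↔
    (∀ (S : Set (X → Ω)) (d : ΦX), c' S = S → αX S = d →
      αF (Λ S) = αF (Λ (γX d))) := by
  have galX : ∀ (S : Set (X → Ω)) (d : ΦX), S ⊆ γX d ↔ d ≤ αX S := by
    intro S d
    rw [hγX, hαX]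
    constructor
    · intro h; exact le_iInf₂ fun k hk => h hk
    · intro h k hk; exact h.trans (iInf₂_le k hk)
  have galF : ∀ (S : Set (FX → Ω)) (d : ΦFX), S ⊆ γF d ↔ d ≤ αF S := by
    intro S d
    rw [hγF, hαF]
    constructor
    · intro h; exact le_iInf₂ fun k hk => h hk
    · intro h k hk; exact h.trans (iInf₂_le k hk)
  have hαXanti : ∀ S T : Set (X → Ω), S ⊆ T → αX T ≤ αX S := by
    intro S T hST
    rw [hαX, hαX]
    exact le_iInf₂ fun k hk => iInf₂_le k (hST hk)
  have hαFanti : ∀ S T : Set (FX → Ω), S ⊆ T → αF T ≤ αF S := by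
    intro S T hST
    rw [hαF, hαF]
    exact le_iInf₂ fun k hk => iInf₂_le k (hST hk)
  have hSγ : ∀ S : Set (X → Ω), S ⊆ γX (αX S) := fun S =>
    (hc'ext S).trans (hsub S)
  have hαγα : ∀ S : Set (X → Ω), αX (γX (αX S)) = αX S :=
    fun S => le_antisymm (hαXanti _ _ (hSγ S)) ((galX _ _).mp subset_rfl)
  have hfix : ∀ S : Set (X → Ω), c' (γX (αX S)) = γX (αX S) := by
    intro S
    refine subset_antisymm ?_ (hc'ext _)
    have := hsub (γX (αX S))
    rwa [hαγα S] at this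
  constructor
  · intro h S d hcS hd
    subst hd
    refine le_antisymm ?_ (hαFanti _ _ (hΛ ((hc'ext S).trans (hsub S))))
    refine (galF _ _).mp ?_
    have h1 : Λ (γX (αX S)) ⊆ Λ (c' (γX (αX S))) := hΛ (hc'ext _)
    have h2 := h S
    rw [hcS] at h2
    exact h1.trans h2
  · intro h S
    rw [hfix S]
    have key : αF (Λ (c' S)) = αF (Λ (γX (αX (c' S)))) :=
      h (c' S) (αX (c' S)) (hc'idem S) rfl
    have hα : αX (c' S) = αX S := by
      refine le_antisymm (hαXanti _ _ (hc'ext S)) ?_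
      have := hαXanti _ _ (hsub S)
      rwa [hαγα S] at this
    rw [key, hα]
    exact (galF _ _).mpr le_rfl
end
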